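/- arXiv:2307.00839 — 2 statements merged into one kernel-verified Lean document; each statement's English description precedes it below -/
import Mathlib

section
/- Fix 0 < n₁, n₂ ≤ 2 and let p₁, p₂ ∈ S^{n₁,n₂} be elliptic symbols in S^{n₁,n₂} having the same principal symbol, with Hamiltonian flows (φ₁^t), (φ₂^t). For every T > 0 there exists a constant C = C_T > 0 such that: for every function q = q(t; ρ) on ℝ × ℝ^{2d} which is Lipschitz in ρ uniformly in t (with uniform Lipschitz constant L in the variable ρ) and supported in [−T, T] × ℝ^{2d}, one has |∫_ℝ q(t; φ₂^t(ρ)) dt − ∫_ℝ q(t; φ₁^t(ρ)) dt| ≤ C·L for every ρ ∈ ℝ^{2d}. -/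
noncomputable section

/-- The phase space `ℝ^{2d} ≃ ℝ^d_x × ℝ^d_ξ`, as a Euclidean space indexed by `Fin d ⊕ Fin d`. -/
abbrev PhaseSpace (d : ℕ) := EuclideanSpace ℝ (Fin d ⊕ Fin d)

/-- The position component `x` of a phase space point `ρ = (x, ξ)`. -/
def posPart {d : ℕ} (ρ : PhaseSpace d) : EuclideanSpace ℝ (Fin d) :=
  WithLp.toLp 2 (fun i => ρ (Sum.inl i))

/-- The momentum component `ξ` of a phase space point `ρ = (x, ξ)`. -/
def momPart {d : ℕ} (ρ : PhaseSpace d) : EuclideanSpace ℝ (Fin d) :=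
  WithLp.toLp 2 (fun i => ρ (Sum.inr i))

/-- The Japanese bracket `⟨x⟩ = (1 + |x|²)^{1/2}`. -/
def jap {E : Type*} [NormedAddCommGroup E] (x : E) : ℝ := Real.sqrt (1 + ‖x‖ ^ 2)

/-- Membership in the symbol class `S^{n₁,n₂}`. -/
def InSymbolClass (d : ℕ) (n₁ n₂ : ℝ) (a : PhaseSpace d → ℝ) : Prop :=
  ContDiff ℝ (⊤ : ℕ∞) a ∧ ∀ k : ℕ, ∃ C > 0, ∀ ρ : PhaseSpace d,
    ‖iteratedFDeriv ℝ k a ρ‖ ≤ C * (jap (posPart ρ) ^ (n₁ - k) + jap (momPart ρ) ^ (n₂ - k))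

/-- Ellipticity in the class `S^{n₁,n₂}`. -/
def IsElliptic (d : ℕ) (n₁ n₂ : ℝ) (a : PhaseSpace d → ℝ) : Prop :=
  ∃ c > 0, ∃ R₀ > 0, ∀ ρ : PhaseSpace d, R₀ ≤ ‖ρ‖ →
    c * (jap (posPart ρ) ^ n₁ + jap (momPart ρ) ^ n₂) ≤ a ρ

/-- The standard symplectic matrix `J` acting on phase space: `J (x, ξ) = (ξ, -x)`. -/
def symplJ {d : ℕ} (ρ : PhaseSpace d) : PhaseSpace d :=
  WithLp.toLp 2 (fun i => match i with
  | Sum.inl j => ρ (Sum.inr j)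
  | Sum.inr j => -ρ (Sum.inl j))

/-- `φ` is the (globally defined) Hamiltonian flow of `p`. -/
def IsHamFlow (d : ℕ) (p : PhaseSpace d → ℝ) (φ : ℝ → PhaseSpace d → PhaseSpace d) : Prop :=
  (∀ ρ, φ 0 ρ = ρ) ∧ ∀ ρ t, HasDerivAt (fun s => φ s ρ) (symplJ (gradient p (φ t ρ))) t

/-! The symbol estimates with `n₁, n₂ ≤ 2` bound the Hessian of `p₁` and the gradient of
`p₂ - p₁` uniformly, so `J∇p₁` is globally Lipschitz and `J∇p₂` is a uniformly small
perturbation of it. Grönwall's inequality keeps `φ₂ t ρ` within a distance `B` of `φ₁ t ρ` for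
`|t| ≤ T`, uniformly in `ρ`, and integrating the Lipschitz bound on `q` over `[-T, T]` gives
`2 T B L`. -/

open InnerProductSpace MeasureTheory Set
open scoped NNReal

section Gronwall

variable {E : Type*} [NormedAddCommGroup E] [NormedSpace ℝ E]
  {v w : E → E} {f g : ℝ → E} {K : ℝ≥0} {ε : ℝ}

theorem dist_le_gronwallBound_of_hasDerivAt_of_nonneg (hv : LipschitzWith K v)
    (hw : ∀ x, dist (w x) (v x) ≤ ε) (hf : ∀ t, HasDerivAt f (v (f t)) t)
    (hg : ∀ t, HasDerivAt g (w (g t)) t) (h0 : f 0 = g 0) {t : ℝ} (ht : 0 ≤ t) :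
    dist (f t) (g t) ≤ gronwallBound 0 K ε t := by
  have key := dist_le_of_approx_trajectories_ODE (v := fun _ => v) (a := 0) (b := t)
    (εf := 0) (εg := ε) (δ := 0) (fun _ => hv)
    (fun s _ => (hf s).continuousAt.continuousWithinAt) (fun s _ => (hf s).hasDerivWithinAt)
    (fun s _ => (dist_self _).le)
    (fun s _ => (hg s).continuousAt.continuousWithinAt) (fun s _ => (hg s).hasDerivWithinAt)
    (fun s _ => hw _) (by rw [h0, dist_self]) t ⟨ht, le_rfl⟩
  simpa only [zero_add, sub_zero] using key

theorem dist_le_gronwallBound_of_hasDerivAt (hv : LipschitzWith K v)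
    (hw : ∀ x, dist (w x) (v x) ≤ ε) (hf : ∀ t, HasDerivAt f (v (f t)) t)
    (hg : ∀ t, HasDerivAt g (w (g t)) t) (h0 : f 0 = g 0) (t : ℝ) :
    dist (f t) (g t) ≤ gronwallBound 0 K ε |t| := by
  rcases le_total 0 t with ht | ht
  · rw [abs_of_nonneg ht]
    exact dist_le_gronwallBound_of_hasDerivAt_of_nonneg hv hw hf hg h0 ht
  -- Running time backwards turns the trajectories of `v`, `w` into those of `-v`, `-w`.
  have reverse : ∀ {u : E → E} {h : ℝ → E}, (∀ t, HasDerivAt h (u (h t)) t) →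
      ∀ s, HasDerivAt (fun s => h (-s)) ((-u) (h (-s))) s := fun hh s => by
    have hs := (hh (-s)).scomp s (hasDerivAt_neg s)
    rwa [neg_one_smul] at hs
  have := dist_le_gronwallBound_of_hasDerivAt_of_nonneg hv.neg
    (fun x => by simpa [dist_neg_neg] using hw x) (reverse hf) (reverse hg)
    (by simpa using h0) (neg_nonneg.2 ht)
  simpa [abs_of_nonpos ht] using this

end Gronwall

section Gradient

variable {E : Type*} [NormedAddCommGroup E] [InnerProductSpace ℝ E] [CompleteSpace E]

theorem norm_gradient (f : E → ℝ) (x : E) : ‖gradient f x‖ = ‖fderiv ℝ f x‖ :=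
  (toDual ℝ E).symm.norm_map _

theorem gradient_fun_sub {f g : E → ℝ} {x : E} (hf : DifferentiableAt ℝ f x)
    (hg : DifferentiableAt ℝ g x) :
    gradient (fun y => f y - g y) x = gradient f x - gradient g x := by
  simp only [gradient, fderiv_fun_sub hf hg, map_sub]

theorem lipschitzWith_gradient_of_norm_iteratedFDeriv_two_le {f : E → ℝ} {K : ℝ≥0}
    (hf : ContDiff ℝ 2 f) (hK : ∀ x, ‖iteratedFDeriv ℝ 2 f x‖ ≤ K) :
    LipschitzWith K (gradient f) := by
  have hlip : LipschitzWith K (fderiv ℝ f) := by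
    refine lipschitzWith_of_nnnorm_fderiv_le
      ((hf.fderiv_right (m := 1) (by norm_num)).differentiable (by norm_num)) fun x => ?_
    rw [← NNReal.coe_le_coe, coe_nnnorm, ← norm_iteratedFDeriv_one, norm_iteratedFDeriv_fderiv]
    exact hK x
  have h := (toDual ℝ E).symm.isometry.lipschitz.comp hlip
  rwa [one_mul] at h

end Gradient

theorem norm_integral_le_of_forall_notMem_Icc {E : Type*} [NormedAddCommGroup E]
    [NormedSpace ℝ E] {F : ℝ → E} {a b B : ℝ} (hab : a ≤ b)
    (hF : ∀ t ∉ Icc a b, F t = 0) (hB : ∀ t ∈ Icc a b, ‖F t‖ ≤ B) :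
    ‖∫ t, F t‖ ≤ B * (b - a) := by
  rw [← setIntegral_eq_integral_of_forall_compl_eq_zero hF, ← Real.volume_real_Icc_of_le hab]
  exact norm_setIntegral_le_of_norm_le_const measure_Icc_lt_top hB

theorem one_le_jap {E : Type*} [NormedAddCommGroup E] (x : E) : 1 ≤ jap x :=
  Real.one_le_sqrt.2 (le_add_of_nonneg_right (sq_nonneg _))

theorem symplJ_sub {d : ℕ} (a b : PhaseSpace d) : symplJ (a - b) = symplJ a - symplJ b := by
  ext (i | i) <;> simp [symplJ]; ring

theorem norm_symplJ {d : ℕ} (a : PhaseSpace d) : ‖symplJ a‖ = ‖a‖ := by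
  simp only [EuclideanSpace.norm_eq, Fintype.sum_sum_type, symplJ, Real.norm_eq_abs, sq_abs,
    neg_sq, add_comm]

theorem isometry_symplJ {d : ℕ} : Isometry (symplJ (d := d)) :=
  Isometry.of_dist_eq fun a b => by rw [dist_eq_norm, dist_eq_norm, ← symplJ_sub, norm_symplJ]

namespace InSymbolClass

variable {d : ℕ} {n₁ n₂ : ℝ} {a : PhaseSpace d → ℝ}

theorem exists_norm_iteratedFDeriv_le (ha : InSymbolClass d n₁ n₂ a) {k : ℕ}
    (h₁ : n₁ ≤ k) (h₂ : n₂ ≤ k) : ∃ C : ℝ≥0, ∀ ρ, ‖iteratedFDeriv ℝ k a ρ‖ ≤ C := by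
  obtain ⟨C, hC, hbound⟩ := ha.2 k
  refine ⟨(2 * C).toNNReal, fun ρ => (hbound ρ).trans ?_⟩
  have hx := Real.rpow_le_one_of_one_le_of_nonpos (one_le_jap (posPart ρ)) (sub_nonpos.2 h₁)
  have hξ := Real.rpow_le_one_of_one_le_of_nonpos (one_le_jap (momPart ρ)) (sub_nonpos.2 h₂)
  rw [Real.coe_toNNReal _ (by positivity)]
  nlinarith

theorem exists_lipschitzWith_gradient (ha : InSymbolClass d n₁ n₂ a) (h₁ : n₁ ≤ 2)
    (h₂ : n₂ ≤ 2) : ∃ K : ℝ≥0, LipschitzWith K (gradient a) := by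
  obtain ⟨K, hK⟩ := ha.exists_norm_iteratedFDeriv_le (k := 2) (by exact_mod_cast h₁)
    (by exact_mod_cast h₂)
  exact ⟨K, lipschitzWith_gradient_of_norm_iteratedFDeriv_two_le
    (ha.1.of_le (WithTop.coe_le_coe.2 le_top)) hK⟩

theorem exists_norm_gradient_le (ha : InSymbolClass d n₁ n₂ a) (h₁ : n₁ ≤ 1)
    (h₂ : n₂ ≤ 1) : ∃ M : ℝ≥0, ∀ ρ, ‖gradient a ρ‖ ≤ M := by
  obtain ⟨M, hM⟩ := ha.exists_norm_iteratedFDeriv_le (k := 1) (by exact_mod_cast h₁)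
    (by exact_mod_cast h₂)
  exact ⟨M, fun ρ => by simpa [norm_gradient] using hM ρ⟩

end InSymbolClass

theorem IsHamFlow.dist_le_gronwallBound {d : ℕ} {p₁ p₂ : PhaseSpace d → ℝ}
    {φ₁ φ₂ : ℝ → PhaseSpace d → PhaseSpace d} (hφ₁ : IsHamFlow d p₁ φ₁)
    (hφ₂ : IsHamFlow d p₂ φ₂) {K : ℝ≥0} {M : ℝ} (hK : LipschitzWith K (gradient p₁))
    (hM : ∀ ρ, ‖gradient p₂ ρ - gradient p₁ ρ‖ ≤ M) (ρ : PhaseSpace d) (t : ℝ) :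
    dist (φ₂ t ρ) (φ₁ t ρ) ≤ gronwallBound 0 K M |t| := by
  have hv : LipschitzWith K (fun x => symplJ (gradient p₁ x)) := by
    have h := isometry_symplJ.lipschitz.comp hK
    rwa [one_mul] at h
  have hw : ∀ x, dist (symplJ (gradient p₂ x)) (symplJ (gradient p₁ x)) ≤ M := fun x => by
    rw [isometry_symplJ.dist_eq, dist_eq_norm]
    exact hM x
  rw [dist_comm]
  exact dist_le_gronwallBound_of_hasDerivAt hv hw (hφ₁.2 ρ) (hφ₂.2 ρ) (by rw [hφ₁.1, hφ₂.1]) t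

theorem exists_dist_hamFlow_le {d : ℕ} {n₁ n₂ : ℝ} (hn₁ : n₁ ≤ 2) (hn₂ : n₂ ≤ 2)
    {p₁ p₂ : PhaseSpace d → ℝ} (hp₁ : InSymbolClass d n₁ n₂ p₁)
    (hp₂ : InSymbolClass d n₁ n₂ p₂)
    (hsame : InSymbolClass d (n₁ - 1) (n₂ - 1) (fun ρ => p₂ ρ - p₁ ρ))
    {φ₁ φ₂ : ℝ → PhaseSpace d → PhaseSpace d} (hφ₁ : IsHamFlow d p₁ φ₁)
    (hφ₂ : IsHamFlow d p₂ φ₂) (T : ℝ) :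
    ∃ B > 0, ∀ ρ, ∀ t ∈ Icc (-T) T, dist (φ₂ t ρ) (φ₁ t ρ) ≤ B := by
  obtain ⟨K, hK⟩ := hp₁.exists_lipschitzWith_gradient hn₁ hn₂
  obtain ⟨M, hM⟩ := hsame.exists_norm_gradient_le (by linarith) (by linarith)
  have hdiff : ∀ ρ, ‖gradient p₂ ρ - gradient p₁ ρ‖ ≤ M := fun ρ => by
    rw [← gradient_fun_sub ((hp₂.1.differentiable (by simp)) ρ)
      ((hp₁.1.differentiable (by simp)) ρ)]
    exact hM ρ
  have hmono := gronwallBound_mono le_rfl M.coe_nonneg K.coe_nonneg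
  refine ⟨gronwallBound 0 K M |T| + 1, ?_, fun ρ t ht => ?_⟩
  · have := hmono (abs_nonneg T)
    rw [gronwallBound_x0] at this
    linarith
  · have := hmono (abs_le_abs ht.2 (by linarith [ht.1]))
    linarith [hφ₁.dist_le_gronwallBound hφ₂ hK hdiff ρ t]

theorem stmt_2_general (d : ℕ) (n₁ n₂ : ℝ)
    (hn₁' : n₁ ≤ 2) (hn₂' : n₂ ≤ 2)
    (p₁ p₂ : PhaseSpace d → ℝ)
    (hp₁ : InSymbolClass d n₁ n₂ p₁) (hp₂ : InSymbolClass d n₁ n₂ p₂)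
    (hsame : InSymbolClass d (n₁ - 1) (n₂ - 1) (fun ρ => p₂ ρ - p₁ ρ))
    (φ₁ φ₂ : ℝ → PhaseSpace d → PhaseSpace d)
    (hφ₁ : IsHamFlow d p₁ φ₁) (hφ₂ : IsHamFlow d p₂ φ₂)
    (T : ℝ) (hT : 0 < T) :
    ∃ C > 0, ∀ (q : ℝ → PhaseSpace d → ℝ) (L : ℝ), 0 ≤ L →
      (∀ (t : ℝ) (ρ₁ ρ₂ : PhaseSpace d), |q t ρ₁ - q t ρ₂| ≤ L * ‖ρ₁ - ρ₂‖) →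
      (∀ (t : ℝ) (ρ : PhaseSpace d), t ∉ Set.Icc (-T) T → q t ρ = 0) →
      ∀ ρ : PhaseSpace d,
        MeasureTheory.Integrable (fun t => q t (φ₁ t ρ)) →
        MeasureTheory.Integrable (fun t => q t (φ₂ t ρ)) →
        |(∫ t : ℝ, q t (φ₂ t ρ)) - ∫ t : ℝ, q t (φ₁ t ρ)| ≤ C * L := by
  obtain ⟨B, hB, hdist⟩ := exists_dist_hamFlow_le hn₁' hn₂' hp₁ hp₂ hsame hφ₁ hφ₂ T
  refine ⟨2 * T * B, by positivity, fun q L hL hq hsupp ρ h₁ h₂ => ?_⟩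
  rw [← integral_sub h₂ h₁, ← Real.norm_eq_abs]
  calc ‖∫ t, (q t (φ₂ t ρ) - q t (φ₁ t ρ))‖
      ≤ L * B * (T - -T) := by
        refine norm_integral_le_of_forall_notMem_Icc (by linarith) (fun t ht => ?_)
          fun t ht => ?_
        · rw [hsupp t _ ht, hsupp t _ ht, sub_self]
        · rw [Real.norm_eq_abs]
          exact (hq t _ _).trans (by rw [← dist_eq_norm]; gcongr; exact hdist ρ t ht)
    _ = 2 * T * B * L := by ring

/-- Invariance of classical averages under subprincipal perturbations: for elliptic
`p₁, p₂ ∈ S^{n₁,n₂}` (`0 < n₁, n₂ ≤ 2`) with the same principal symbol, and any `q(t;ρ)`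
`L`-Lipschitz in `ρ`, supported in `[-T,T] × ℝ^{2d}`, the time averages of `q` along the
two flows differ by at most `C·L`. -/
theorem stmt_2 (d : ℕ) (n₁ n₂ : ℝ) (hn₁ : 0 < n₁) (hn₂ : 0 < n₂)
    (hn₁' : n₁ ≤ 2) (hn₂' : n₂ ≤ 2)
    (p₁ p₂ : PhaseSpace d → ℝ)
    (hp₁ : InSymbolClass d n₁ n₂ p₁) (hp₂ : InSymbolClass d n₁ n₂ p₂)
    (he₁ : IsElliptic d n₁ n₂ p₁) (he₂ : IsElliptic d n₁ n₂ p₂)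
    (hsame : InSymbolClass d (n₁ - 1) (n₂ - 1) (fun ρ => p₂ ρ - p₁ ρ))
    (φ₁ φ₂ : ℝ → PhaseSpace d → PhaseSpace d)
    (hφ₁ : IsHamFlow d p₁ φ₁) (hφ₂ : IsHamFlow d p₂ φ₂)
    (T : ℝ) (hT : 0 < T) :
    ∃ C > 0, ∀ (q : ℝ → PhaseSpace d → ℝ) (L : ℝ), 0 ≤ L →
      (∀ (t : ℝ) (ρ₁ ρ₂ : PhaseSpace d), |q t ρ₁ - q t ρ₂| ≤ L * ‖ρ₁ - ρ₂‖) →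
      (∀ (t : ℝ) (ρ : PhaseSpace d), t ∉ Set.Icc (-T) T → q t ρ = 0) →
      ∀ ρ : PhaseSpace d,
        MeasureTheory.Integrable (fun t => q t (φ₁ t ρ)) →
        MeasureTheory.Integrable (fun t => q t (φ₂ t ρ)) →
        |(∫ t : ℝ, q t (φ₂ t ρ)) - ∫ t : ℝ, q t (φ₁ t ρ)| ≤ C * L :=
  stmt_2_general d n₁ n₂ hn₁' hn₂' p₁ p₂ hp₁ hp₂ hsame φ₁ φ₂ hφ₁ hφ₂ T hT

end
end

section
/- Let V satisfy Assumption (V) with exponent m > 0 and let (φ^t) be the Hamiltonian flow of p(x,ξ) = V(x) + |ξ|²/2, φ^t(ρ) = (x^t(ρ), ξ^t(ρ)). (i) If m ≥ 1/2, there exist C > 0 and E₀ > 0 such that for all E ≥ E₀, all r ≥ 0 and all ρ with p(ρ) = E: the Lebesgue measure of {t ∈ [0, E^{(1/2)(1/m − 1)}] : |x^t(ρ)| < r} is at most C·r/√E. (ii) If m < 1/2, then for every ε ∈ (0, (1/2)(1/m − 1)) there exist C > 0 and E₀ > 0 such that for all E ≥ E₀, all r ≥ 0 and all ρ with p(ρ)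 = E: the Lebesgue measure of {t ∈ [0, E^{(1/2)(1/m − 1) − ε}] : |x^t(ρ)| < r} is at most C·r/√E. -/
/-!
Along a trajectory of energy `E` the speed is at most `2√E`, and the escape function `⟪x, ξ⟫`
has derivative `|ξ|² - ⟪x, ∇V x⟫ = 2(E - V x) - ⟪x, ∇V x⟫ ≥ E` as long as `|x| ≤ R`, where
`R ≍ E^{1/(2m)}`; while `|x| < r` it is bounded by `2r√E`. Cut `[0, E^{(1/2)(1/m - 1)}]`, an
interval of length `≍ R / √E`, into boundedly many windows of length `R / (4√E)`. If `2r ≤ R`,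
a trajectory that meets the ball of radius `r` during a window stays in the ball of radius `R`
for the whole window, so there `⟪x, ξ⟫` increases at rate `≥ E` and the time spent in the small
ball is at most `4r/√E`. If `2r > R`, the whole interval is already of length `O(r/√E)`.
-/

noncomputable section

open MeasureTheory

/-- `φ` is the (globally defined) Hamiltonian flow of `p(x,ξ) = V(x) + |ξ|²/2`:
writing `φᵗ(ρ) = (xᵗ, ξᵗ)`, one has `(d/dt) xᵗ = ξᵗ`, `(d/dt) ξᵗ = -∇V(xᵗ)`, `φ⁰(ρ) = ρ`. -/
def IsFlowV (d : ℕ) (V : EuclideanSpace ℝ (Fin d) → ℝ)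
    (φ : ℝ → EuclideanSpace ℝ (Fin d) × EuclideanSpace ℝ (Fin d) →
      EuclideanSpace ℝ (Fin d) × EuclideanSpace ℝ (Fin d)) : Prop :=
  (∀ ρ, φ 0 ρ = ρ) ∧ ∀ ρ t,
    HasDerivAt (fun s => (φ s ρ).1) ((φ t ρ).2) t ∧
    HasDerivAt (fun s => (φ s ρ).2) (-gradient V ((φ t ρ).1)) t

open Set
open scoped RealInnerProductSpace

section JapaneseBracket

variable {F : Type*} [NormedAddCommGroup F]

lemma jap_pos (x : F) : 0 < jap x := Real.sqrt_pos.2 (by positivity)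

lemma norm_le_jap (x : F) : ‖x‖ ≤ jap x := Real.le_sqrt_of_sq_le (by linarith)

lemma jap_rpow_two_mul (x : F) (m : ℝ) : jap x ^ (2 * m) = (1 + ‖x‖ ^ 2) ^ m := by
  rw [jap, Real.sqrt_eq_rpow, ← Real.rpow_mul (by positivity)]
  ring_nf

lemma mul_jap_rpow_le {m C E : ℝ} (hm : 0 < m) (hC : 0 < C) (hE : 2 ^ m * C ≤ E) {y : F}
    (hy : ‖y‖ ≤ √((E / C) ^ (1 / m) / 2)) : C * jap y ^ (2 * m) ≤ E := by
  have hEC : 2 ^ m ≤ E / C := (le_div_iff₀ hC).2 hE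
  have hEC₀ : 0 ≤ E / C := le_trans (by positivity) hEC
  have hQ : 2 ≤ (E / C) ^ (1 / m) :=
    calc (2 : ℝ) = (2 ^ m) ^ (1 / m) := by
          rw [← Real.rpow_mul zero_le_two, mul_one_div_cancel hm.ne', Real.rpow_one]
      _ ≤ (E / C) ^ (1 / m) := by gcongr
  have hy2 : ‖y‖ ^ 2 ≤ (E / C) ^ (1 / m) / 2 :=
    (Real.le_sqrt (norm_nonneg y) (by linarith)).1 hy
  calc C * jap y ^ (2 * m) ≤ C * ((E / C) ^ (1 / m)) ^ m := by
        rw [jap_rpow_two_mul]; gcongr; linarith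
    _ = E := by
        rw [← Real.rpow_mul hEC₀, one_div_mul_cancel hm.ne', Real.rpow_one]
        field_simp

lemma abs_inner_gradient_le [InnerProductSpace ℝ F] [CompleteSpace F] {V : F → ℝ} {C m : ℝ}
    {x : F} (h : ‖iteratedFDeriv ℝ 1 V x‖ ≤ C * jap x ^ (2 * m - 1)) :
    |⟪x, gradient V x⟫| ≤ C * jap x ^ (2 * m) := by
  rw [norm_iteratedFDeriv_one, ← (InnerProductSpace.toDual ℝ F).symm.norm_map] at h
  calc |⟪x, gradient V x⟫| ≤ ‖x‖ * ‖gradient V x‖ := abs_real_inner_le_norm _ _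
    _ ≤ jap x * (C * jap x ^ (2 * m - 1)) :=
        mul_le_mul (norm_le_jap x) h (norm_nonneg _) (jap_pos x).le
    _ = C * jap x ^ (2 * m) := by
        rw [Real.rpow_sub_one (jap_pos x).ne']
        field_simp [(jap_pos x).ne']

end JapaneseBracket

lemma rpow_eq_mul_sqrt_div_sqrt {m C E : ℝ} (hC : 0 < C) (hE : 0 < E) :
    E ^ ((1 / 2 : ℝ) * (1 / m - 1)) = √(2 * C ^ (1 / m)) * √((E / C) ^ (1 / m) / 2) / √E := by
  rw [← Real.sqrt_mul (by positivity), Real.div_rpow hE.le hC.le,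
    show 2 * C ^ (1 / m) * (E ^ (1 / m) / C ^ (1 / m) / 2) = E ^ (1 / m) by field_simp,
    Real.sqrt_eq_rpow, Real.sqrt_eq_rpow, ← Real.rpow_mul hE.le, ← Real.rpow_sub hE]
  ring_nf

lemma bddBelow_range_of_nonneg_of_le_norm {F : Type*} [NormedAddCommGroup F] [ProperSpace F]
    {V : F → ℝ} (hV : Continuous V) {r₀ : ℝ} (h : ∀ x, r₀ ≤ ‖x‖ → 0 ≤ V x) :
    BddBelow (range V) := by
  obtain ⟨M, hM⟩ := (isCompact_closedBall (0 : F) r₀).bddBelow_image hV.continuousOn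
  refine ⟨min M 0, ?_⟩
  rintro _ ⟨x, rfl⟩
  by_cases hx : r₀ ≤ ‖x‖
  · exact (min_le_right _ _).trans (h x hx)
  · exact (min_le_left _ _).trans (hM ⟨x, mem_closedBall_zero_iff.2 (not_le.1 hx).le, rfl⟩)

/-- Two times of `s` are at most `2B/c` apart, because `g` grows at rate `c` in between. -/
lemma volume_le_of_le_deriv_of_abs_le {g g' : ℝ → ℝ} {D s : Set ℝ} {c B : ℝ}
    (hD : Convex ℝ D) (hsD : s ⊆ D) (hg : ∀ t, HasDerivAt g (g' t) t) (hc : 0 < c)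
    (hg' : ∀ t ∈ D, c ≤ g' t) (hB : ∀ t ∈ s, |g t| ≤ B) :
    volume s ≤ ENNReal.ofReal (2 * B / c) := by
  have hgrowth := hD.mul_sub_le_image_sub_of_le_deriv
    (fun t _ => (hg t).continuousAt.continuousWithinAt)
    (fun t _ => (hg t).differentiableAt.differentiableWithinAt)
    (fun t ht => (hg t).deriv ▸ hg' t (interior_subset ht))
  have hspread : ∀ t ∈ s, ∀ u ∈ s, t ≤ u → c * (u - t) ≤ 2 * B := fun t ht u hu htu => by
    have := hgrowth t (hsD ht) u (hsD hu) htu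
    linarith [(abs_le.1 (hB t ht)).1, (abs_le.1 (hB u hu)).2]
  refine (Real.volume_le_diam s).trans (Metric.ediam_le_of_forall_dist_le fun t ht u hu => ?_)
  rw [Real.dist_eq, le_div_iff₀ hc]
  rcases le_total t u with htu | hut
  · rw [abs_of_nonpos (by linarith)]; linarith [hspread t ht u hu htu]
  · rw [abs_of_nonneg (by linarith)]; linarith [hspread u hu t ht hut]

lemma volume_Icc_zero_inter_le {A : Set ℝ} {τ : ℝ} {b : ENNReal} (hτ : 0 ≤ τ)
    (hA : ∀ k : ℕ, volume (Icc (k * τ) ((k + 1) * τ) ∩ A) ≤ b) (N : ℕ) :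
    volume (Icc 0 (N * τ) ∩ A) ≤ N * b := by
  induction N with
  | zero => simpa using measure_mono_null inter_subset_left (measure_singleton (0 : ℝ))
  | succ N ih =>
    have hsplit : Icc 0 ((N + 1 : ℕ) * τ) = Icc 0 (N * τ) ∪ Icc (N * τ) ((N + 1) * τ) := by
      rw [Icc_union_Icc_eq_Icc (by positivity) (by nlinarith)]; push_cast; rfl
    calc volume (Icc 0 ((N + 1 : ℕ) * τ) ∩ A)
        ≤ volume (Icc 0 (N * τ) ∩ A) + volume (Icc (N * τ) ((N + 1) * τ) ∩ A) := by
          rw [hsplit, union_inter_distrib_right]; exact measure_union_le _ _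
      _ ≤ N * b + b := add_le_add ih (hA N)
      _ = (N + 1 : ℕ) * b := by push_cast; ring

/-- Moving at speed `≤ L`, a curve that meets the ball of radius `r` during a window of length `τ`
stays in the ball of radius `R` for the whole window, where the escape function `g` grows at
rate `≥ c`. -/
lemma volume_Icc_inter_norm_lt_le {E : Type*} [NormedAddCommGroup E] [NormedSpace ℝ E]
    {x v : ℝ → E} {g g' : ℝ → ℝ} {L R r B c τ : ℝ}
    (hx : ∀ t, HasDerivAt x (v t) t) (hv : ∀ t, ‖v t‖ ≤ L)
    (hg : ∀ t, HasDerivAt g (g' t) t) (hc : 0 < c) (hg' : ∀ t, ‖x t‖ ≤ R → c ≤ g' t)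
    (hB : ∀ t, ‖x t‖ < r → |g t| ≤ B) (hτ : 0 ≤ τ) (hrR : r + L * τ ≤ R) (N : ℕ) :
    volume (Icc 0 (N * τ) ∩ {t | ‖x t‖ < r}) ≤ N * ENNReal.ofReal (2 * B / c) := by
  refine volume_Icc_zero_inter_le hτ (fun k => ?_) N
  set W := Icc (k * τ) ((k + 1) * τ)
  rcases (W ∩ {t | ‖x t‖ < r}).eq_empty_or_nonempty with hempty | ⟨t₀, ht₀W, ht₀⟩
  · simp [hempty]
  have hL : 0 ≤ L := (norm_nonneg _).trans (hv 0)
  have hstay : ∀ t ∈ W, ‖x t‖ ≤ R := fun t ht => by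
    have hlip := (convex_Icc _ _).norm_image_sub_le_of_norm_hasDerivWithin_le
      (fun t _ => (hx t).hasDerivWithinAt) (fun t _ => hv t) ht₀W ht
    have hdist : ‖t - t₀‖ ≤ τ := by
      rw [← dist_eq_norm]; exact (Real.dist_le_of_mem_Icc ht ht₀W).trans_eq (by ring)
    calc ‖x t‖ ≤ ‖x t₀‖ + ‖x t - x t₀‖ := norm_le_norm_add_norm_sub' _ _
      _ ≤ r + L * τ := add_le_add ht₀.le (hlip.trans (by gcongr))
      _ ≤ R := hrR
  exact volume_le_of_le_deriv_of_abs_le (convex_Icc _ _) inter_subset_left hg hc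
    (fun t ht => hg' t (hstay t ht)) (fun t ht => hB t ht.2)

def hamiltonian {F : Type*} [NormedAddCommGroup F] (V : F → ℝ) (ρ : F × F) : ℝ :=
  V ρ.1 + ‖ρ.2‖ ^ 2 / 2

namespace IsFlowV

variable {d : ℕ} {V : EuclideanSpace ℝ (Fin d) → ℝ}
  {φ : ℝ → EuclideanSpace ℝ (Fin d) × EuclideanSpace ℝ (Fin d) →
    EuclideanSpace ℝ (Fin d) × EuclideanSpace ℝ (Fin d)}
  {ρ : EuclideanSpace ℝ (Fin d) × EuclideanSpace ℝ (Fin d)}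

theorem hamiltonian_eq (hφ : IsFlowV d V φ) (hV : Differentiable ℝ V) (t : ℝ) :
    hamiltonian V (φ t ρ) = hamiltonian V ρ := by
  have hderiv : ∀ t, HasDerivAt (fun s => hamiltonian V (φ s ρ)) 0 t := fun t => by
    obtain ⟨hx, hξ⟩ := hφ.2 ρ t
    have hpot := (hV _).hasGradientAt.hasFDerivAt.comp_hasDerivAt t hx
    have hkin := (hξ.inner ℝ hξ).div_const 2
    rw [InnerProductSpace.toDual_apply_apply] at hpot
    simp only [real_inner_self_eq_norm_sq, inner_neg_left, inner_neg_right] at hkin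
    exact (hpot.add hkin).congr_deriv (by rw [real_inner_comm]; ring)
  have := is_const_of_deriv_eq_zero (fun s => (hderiv s).differentiableAt)
    (fun s => (hderiv s).deriv) t 0
  rwa [hφ.1] at this

theorem hasDerivAt_inner (hφ : IsFlowV d V φ) (t : ℝ) :
    HasDerivAt (fun s => ⟪(φ s ρ).1, (φ s ρ).2⟫)
      (‖(φ t ρ).2‖ ^ 2 - ⟪(φ t ρ).1, gradient V (φ t ρ).1⟫) t := by
  have h := (hφ.2 ρ t).1.inner ℝ (hφ.2 ρ t).2
  rw [inner_neg_right, real_inner_self_eq_norm_sq] at h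
  exact h.congr_deriv (by ring)

theorem norm_snd_le (hφ : IsFlowV d V φ) (hV : Differentiable ℝ V) {M : ℝ}
    (hM : ∀ x, M ≤ V x) (hME : |M| ≤ hamiltonian V ρ) (t : ℝ) :
    ‖(φ t ρ).2‖ ≤ 2 * √(hamiltonian V ρ) := by
  have henergy := hφ.hamiltonian_eq hV (ρ := ρ) t
  rw [← sq_le_sq₀ (norm_nonneg _) (by positivity), mul_pow,
    Real.sq_sqrt ((abs_nonneg M).trans hME)]
  unfold hamiltonian at henergy hME ⊢
  linarith [hM (φ t ρ).1, neg_abs_le M]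

theorem le_deriv_inner (hφ : IsFlowV d V φ) (hV : Differentiable ℝ V) {m C : ℝ}
    (hdrift : ∀ x, 2 * V x + ⟪x, gradient V x⟫ ≤ C * jap x ^ (2 * m)) {t : ℝ}
    (ht : C * jap (φ t ρ).1 ^ (2 * m) ≤ hamiltonian V ρ) :
    hamiltonian V ρ ≤ ‖(φ t ρ).2‖ ^ 2 - ⟪(φ t ρ).1, gradient V (φ t ρ).1⟫ := by
  have henergy := hφ.hamiltonian_eq hV (ρ := ρ) t
  unfold hamiltonian at henergy ht ⊢
  linarith [hdrift (φ t ρ).1]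

theorem volume_Icc_inter_norm_fst_lt_le (hφ : IsFlowV d V φ) {E R r : ℝ} (hE : 0 < E)
    (hspeed : ∀ t, ‖(φ t ρ).2‖ ≤ 2 * √E)
    (hescape : ∀ t, ‖(φ t ρ).1‖ ≤ R → E ≤ ‖(φ t ρ).2‖ ^ 2 - ⟪(φ t ρ).1, gradient V (φ t ρ).1⟫)
    (hr : 0 ≤ r) (hrR : 2 * r ≤ R) (N : ℕ) :
    volume (Icc 0 (N * (R / (4 * √E))) ∩ {t | ‖(φ t ρ).1‖ < r})
      ≤ ENNReal.ofReal (4 * N * r / √E) := by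
  have hsE : 0 < √E := Real.sqrt_pos.2 hE
  have hbound : ∀ t, ‖(φ t ρ).1‖ < r → |⟪(φ t ρ).1, (φ t ρ).2⟫| ≤ r * (2 * √E) :=
    fun t ht => (abs_real_inner_le_norm _ _).trans
      (mul_le_mul ht.le (hspeed t) (norm_nonneg _) hr)
  have hτ : 0 ≤ R / (4 * √E) := div_nonneg (by linarith) (by positivity)
  refine (volume_Icc_inter_norm_lt_le (fun t => (hφ.2 ρ t).1) hspeed hφ.hasDerivAt_inner hE
    hescape hbound hτ ?_ N).trans_eq ?_
  · field_simp
    linarith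
  · rw [← ENNReal.ofReal_natCast, ← ENNReal.ofReal_mul (Nat.cast_nonneg _)]
    congr 1
    field_simp
    rw [Real.sq_sqrt hE.le]
    ring

theorem exists_volume_setOf_norm_lt_le (hφ : IsFlowV d V φ) (hV : Differentiable ℝ V) {m : ℝ}
    (hm : 0 < m) (hVbdd : BddBelow (range V)) {C : ℝ} (hC : 0 < C)
    (hdrift : ∀ x, 2 * V x + ⟪x, gradient V x⟫ ≤ C * jap x ^ (2 * m)) :
    ∃ C > 0, ∃ E₀ > 0, ∀ β : ℝ, β ≤ (1 / 2 : ℝ) * (1 / m - 1) → ∀ E : ℝ, E₀ ≤ E →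
      ∀ r : ℝ, 0 ≤ r → ∀ ρ : EuclideanSpace ℝ (Fin d) × EuclideanSpace ℝ (Fin d),
        hamiltonian V ρ = E →
        volume {t : ℝ | t ∈ Icc 0 (E ^ β) ∧ ‖(φ t ρ).1‖ < r}
          ≤ ENNReal.ofReal (C * r / √E) := by
  obtain ⟨M, hM⟩ := hVbdd
  set K := √(2 * C ^ (1 / m))
  set N := ⌈4 * K⌉₊
  have h2C : 0 < 2 ^ m * C := by positivity
  refine ⟨2 * K + 4 * N, by positivity, 1 + |M| + 2 ^ m * C, by positivity, ?_⟩
  intro β hβ E hE r hr ρ hρ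
  have hE₁ : 1 ≤ E := by linarith [abs_nonneg M]
  have hCE : 2 ^ m * C ≤ E := by linarith [abs_nonneg M]
  have hsE : 0 < √E := Real.sqrt_pos.2 (by linarith)
  -- the radius of the ball on which `⟪x, ξ⟫` grows at rate at least `E`
  set R := √((E / C) ^ (1 / m) / 2)
  have htime : E ^ β ≤ K * R / √E :=
    (Real.rpow_le_rpow_of_exponent_le hE₁ hβ).trans (rpow_eq_mul_sqrt_div_sqrt hC (by linarith)).le
  by_cases hrR : 2 * r ≤ R
  · have hspeed : ∀ t, ‖(φ t ρ).2‖ ≤ 2 * √E := fun t => by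
      rw [← hρ]; exact hφ.norm_snd_le hV (fun x => hM ⟨x, rfl⟩) (by linarith) t
    have hescape : ∀ t, ‖(φ t ρ).1‖ ≤ R →
        E ≤ ‖(φ t ρ).2‖ ^ 2 - ⟪(φ t ρ).1, gradient V (φ t ρ).1⟫ := fun t ht => by
      rw [← hρ]
      exact hφ.le_deriv_inner hV hdrift ((mul_jap_rpow_le hm hC hCE ht).trans_eq hρ.symm)
    have hwindows : E ^ β ≤ N * (R / (4 * √E)) := by
      have hKN : 4 * K ≤ N := Nat.le_ceil _
      refine htime.trans ?_
      rw [div_le_iff₀ hsE]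
      field_simp
      nlinarith [Real.sqrt_nonneg ((E / C) ^ (1 / m) / 2)]
    calc volume {t : ℝ | t ∈ Icc 0 (E ^ β) ∧ ‖(φ t ρ).1‖ < r}
        ≤ volume (Icc 0 (N * (R / (4 * √E))) ∩ {t | ‖(φ t ρ).1‖ < r}) :=
          measure_mono fun t ht => ⟨⟨ht.1.1, ht.1.2.trans hwindows⟩, ht.2⟩
      _ ≤ ENNReal.ofReal (4 * N * r / √E) :=
          hφ.volume_Icc_inter_norm_fst_lt_le (by linarith) hspeed hescape hr hrR N
      _ ≤ ENNReal.ofReal ((2 * K + 4 * N) * r / √E) := by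
          gcongr
          linarith [Real.sqrt_nonneg (2 * C ^ (1 / m))]
  · calc volume {t : ℝ | t ∈ Icc 0 (E ^ β) ∧ ‖(φ t ρ).1‖ < r}
        ≤ volume (Icc 0 (E ^ β)) := measure_mono fun t ht => ht.1
      _ = ENNReal.ofReal (E ^ β) := by rw [Real.volume_Icc, sub_zero]
      _ ≤ ENNReal.ofReal ((2 * K + 4 * N) * r / √E) := by
          refine ENNReal.ofReal_le_ofReal (htime.trans (div_le_div_of_nonneg_right ?_ hsE.le))
          nlinarith [(by positivity : (0 : ℝ) ≤ K), (by positivity : (0 : ℝ) ≤ (N : ℝ))]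

end IsFlowV

/-- Time spent in a spatial ball by high-energy Hamiltonian trajectories of
`p = V(x) + |ξ|²/2`, for a potential `V` satisfying Assumption (V) with exponent `m > 0`. -/
theorem stmt_3 (d : ℕ) (m : ℝ) (hm : 0 < m)
    (V : EuclideanSpace ℝ (Fin d) → ℝ) (hVsmooth : ContDiff ℝ (⊤ : ℕ∞) V)
    (hVell : ∃ C : ℝ, 1 ≤ C ∧ ∃ r₀ > 0, ∀ x, r₀ ≤ ‖x‖ →
      C⁻¹ * jap x ^ (2 * m) ≤ V x ∧ V x ≤ C * jap x ^ (2 * m))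
    (hVder : ∀ k : ℕ, ∃ Ck > 0, ∀ x,
      ‖iteratedFDeriv ℝ k V x‖ ≤ Ck * jap x ^ (2 * m - k))
    (φ : ℝ → EuclideanSpace ℝ (Fin d) × EuclideanSpace ℝ (Fin d) →
      EuclideanSpace ℝ (Fin d) × EuclideanSpace ℝ (Fin d))
    (hφ : IsFlowV d V φ) :
    ((1 / 2 : ℝ) ≤ m → ∃ C > 0, ∃ E₀ > 0, ∀ E : ℝ, E₀ ≤ E → ∀ r : ℝ, 0 ≤ r →
      ∀ ρ : EuclideanSpace ℝ (Fin d) × EuclideanSpace ℝ (Fin d),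
        V ρ.1 + ‖ρ.2‖ ^ 2 / 2 = E →
        volume {t : ℝ | t ∈ Set.Icc 0 (E ^ ((1 / 2 : ℝ) * (1 / m - 1))) ∧ ‖(φ t ρ).1‖ < r}
          ≤ ENNReal.ofReal (C * r / Real.sqrt E)) ∧
    (m < 1 / 2 → ∀ ε : ℝ, 0 < ε → ε < (1 / 2 : ℝ) * (1 / m - 1) →
      ∃ C > 0, ∃ E₀ > 0, ∀ E : ℝ, E₀ ≤ E → ∀ r : ℝ, 0 ≤ r →
      ∀ ρ : EuclideanSpace ℝ (Fin d) × EuclideanSpace ℝ (Fin d),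
        V ρ.1 + ‖ρ.2‖ ^ 2 / 2 = E →
        volume {t : ℝ | t ∈ Set.Icc 0 (E ^ ((1 / 2 : ℝ) * (1 / m - 1) - ε)) ∧ ‖(φ t ρ).1‖ < r}
          ≤ ENNReal.ofReal (C * r / Real.sqrt E)) := by
  obtain ⟨c, hc, r₀, -, hell⟩ := hVell
  obtain ⟨C₀, hC₀, hV₀⟩ := hVder 0
  obtain ⟨C₁, hC₁, hV₁⟩ := hVder 1
  have hV : Differentiable ℝ V := hVsmooth.differentiable (by simp)
  have hVbdd : BddBelow (range V) :=
    bddBelow_range_of_nonneg_of_le_norm hV.continuous fun x hx =>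
      (mul_nonneg (inv_nonneg.2 (zero_le_one.trans hc)) (Real.rpow_nonneg (jap_pos x).le _)).trans
        (hell x hx).1
  have hdrift : ∀ x, 2 * V x + ⟪x, gradient V x⟫ ≤ (2 * C₀ + C₁) * jap x ^ (2 * m) := fun x => by
    have h₀ : |V x| ≤ C₀ * jap x ^ (2 * m) := by simpa using hV₀ x
    have h₁ := abs_inner_gradient_le (by simpa using hV₁ x)
    linarith [le_abs_self (V x), le_abs_self ⟪x, gradient V x⟫]
  obtain ⟨C, hC, E₀, hE₀, H⟩ :=
    hφ.exists_volume_setOf_norm_lt_le hV hm hVbdd (by positivity) hdrift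
  exact ⟨fun _ => ⟨C, hC, E₀, hE₀, H _ le_rfl⟩,
    fun _ ε hε _ => ⟨C, hC, E₀, hE₀, H _ (by linarith)⟩⟩

end
end
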